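/- arXiv:1302.4401 — 3 statements merged into one kernel-verified Lean document; each statement's English description precedes it below -/
import Mathlib

section
/- Every vertex decomposable pure simplicial complex is shellable. (First implication of Theorem 1.4.) -/
open Finset

/-- The least possible number of `(k-1)`-element sets in the shadow of a family
of `n` distinct `k`-element sets. -/
noncomputable def minShadow (n k : ℕ) : ℕ :=
  sInf {m | ∃ U : Finset (Finset ℕ),
    U.card = n ∧ (∀ A ∈ U, A.card = k) ∧ (Finset.shadow U).card = m}

/-- A (finite abstract) simplicial complex: a nonempty family of finite sets
closed under taking subsets. -/
def IsComplex (Δ : Finset (Finset ℕ)) : Prop :=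
  Δ.Nonempty ∧ ∀ σ ∈ Δ, ∀ τ ⊆ σ, τ ∈ Δ

/-- The facets (maximal faces) of `Δ`. -/
def facets (Δ : Finset (Finset ℕ)) : Finset (Finset ℕ) :=
  Δ.filter fun σ => ∀ τ ∈ Δ, σ ⊆ τ → σ = τ

/-- `Δ` is pure of dimension `d`: every facet has `d + 1` elements. -/
def IsPureDim (Δ : Finset (Finset ℕ)) (d : ℕ) : Prop :=
  ∀ σ ∈ facets Δ, σ.card = d + 1

/-- `Δ` is pure: all facets have the same number of elements. -/
def IsPure (Δ : Finset (Finset ℕ)) : Prop :=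
  ∃ k, ∀ σ ∈ facets Δ, σ.card = k

/-- The link of the vertex `x` in `Δ`:
`lk_Δ(x) = {τ ∈ Δ : x ∉ τ and τ ∪ {x} ∈ Δ}`. -/
def link (Δ : Finset (Finset ℕ)) (x : ℕ) : Finset (Finset ℕ) :=
  Δ.filter fun τ => x ∉ τ ∧ insert x τ ∈ Δ

/-- The deletion of the vertex `x` from `Δ`: `Δ ∖ x = {τ ∈ Δ : x ∉ τ}`. -/
def deletion (Δ : Finset (Finset ℕ)) (x : ℕ) : Finset (Finset ℕ) :=
  Δ.filter fun τ => x ∉ τ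

/-- `Δ` is an extremal complex of dimension `d`: it is a pure simplicial complex
of dimension `d` whose number of `d`-element faces is the least possible among
all families of `(facets Δ).card` sets of size `d + 1`. -/
def IsExtremal (Δ : Finset (Finset ℕ)) (d : ℕ) : Prop :=
  IsComplex Δ ∧ IsPureDim Δ d ∧
  (Δ.filter fun σ => σ.card = d).card = minShadow (facets Δ).card (d + 1)

/-- Vertex decomposability of a pure simplicial complex: either `Δ` consists only
of the empty face, or `Δ` is a single vertex, or some vertex `x` has both link and
deletion pure and vertex decomposable. -/
inductive VertexDecomposable : Finset (Finset ℕ) → Prop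
  | emptyFace : VertexDecomposable {∅}
  | point (x : ℕ) : VertexDecomposable {∅, {x}}
  | step (Δ : Finset (Finset ℕ)) (x : ℕ) (hx : {x} ∈ Δ)
      (hl₁ : IsPure (link Δ x)) (hl₂ : VertexDecomposable (link Δ x))
      (hd₁ : IsPure (deletion Δ x)) (hd₂ : VertexDecomposable (deletion Δ x)) :
      VertexDecomposable Δ

/-- Shellability of a pure simplicial complex: the facets can be ordered
`F 0, F 1, …, F (n-1)` so that for each `j ≥ 1` and each `i < j` there is
`i' < j` with `|F j ∩ F i'| = |F j| - 1` and `F j ∩ F i ⊆ F j ∩ F i'`. -/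
def IsShellable (Δ : Finset (Finset ℕ)) : Prop :=
  ∃ (n : ℕ) (F : ℕ → Finset ℕ),
    facets Δ = (Finset.range n).image F ∧
    (∀ i < n, ∀ j < n, F i = F j → i = j) ∧
    ∀ j, 1 ≤ j → j < n → ∀ i < j, ∃ i' < j,
      (F j ∩ F i').card = (F j).card - 1 ∧ F j ∩ F i ⊆ F j ∩ F i'

/-!
Induction along the decomposition. If the link and the deletion of `x` are shellable, list
first the facets of `Δ` avoiding `x` (by purity these are the facets of the deletion, unless
`Δ` is a cone over `x`), then the facets `x ∪ A`, `A` running through the facets of the link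
in shelling order. Each `x ∪ A` meets every earlier facet avoiding `x` inside the
codimension-one face `A`, which lies in a facet of the deletion.
-/

section Facets

variable {Δ : Finset (Finset ℕ)} {x : ℕ}

lemma mem_facets {σ : Finset ℕ} : σ ∈ facets Δ ↔ σ ∈ Δ ∧ ∀ τ ∈ Δ, σ ⊆ τ → σ = τ := by
  simp [facets]

lemma isAntichain_facets : IsAntichain (· ⊆ ·) (facets Δ : Set (Finset ℕ)) :=
  fun _ hσ _ hτ hne hsub => hne ((mem_facets.1 hσ).2 _ (mem_facets.1 hτ).1 hsub)

lemma exists_mem_facets_superset {σ : Finset ℕ} (hσ : σ ∈ Δ) : ∃ F ∈ facets Δ, σ ⊆ F := by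
  obtain ⟨F, hF, hmax⟩ := (Δ.filter (σ ⊆ ·)).exists_max_image card ⟨σ, by simp [hσ]⟩
  simp only [mem_filter] at hF hmax
  refine ⟨F, mem_facets.2 ⟨hF.1, fun τ hτ hFτ => ?_⟩, hF.2⟩
  exact eq_of_subset_of_card_le hFτ (hmax τ ⟨hτ, hF.2.trans hFτ⟩)

lemma facets_eq_singleton {σ : Finset ℕ} (hσ : σ ∈ Δ) (hmax : ∀ τ ∈ Δ, τ ⊆ σ) :
    facets Δ = {σ} := by
  ext τ
  simp only [mem_facets, mem_singleton]
  refine ⟨fun hτ => hτ.2 σ hσ (hmax τ hτ.1), ?_⟩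
  rintro rfl
  exact ⟨hσ, fun ρ hρ hτρ => subset_antisymm hτρ (hmax ρ hρ)⟩

lemma IsComplex.empty_mem (h : IsComplex Δ) : ∅ ∈ Δ := by
  obtain ⟨σ, hσ⟩ := h.1
  exact h.2 σ hσ ∅ (empty_subset σ)

lemma IsComplex.link (h : IsComplex Δ) (hx : {x} ∈ Δ) : IsComplex (link Δ x) := by
  refine ⟨⟨∅, ?_⟩, fun σ hσ τ hτ => ?_⟩
  · simpa [_root_.link] using And.intro h.empty_mem hx
  · simp only [_root_.link, mem_filter] at hσ ⊢
    exact ⟨h.2 σ hσ.1 τ hτ, fun hxτ => hσ.2.1 (hτ hxτ), h.2 _ hσ.2.2 _ (insert_subset_insert x hτ)⟩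

lemma IsComplex.deletion (h : IsComplex Δ) : IsComplex (deletion Δ x) := by
  refine ⟨⟨∅, by simp [_root_.deletion, h.empty_mem]⟩, fun σ hσ τ hτ => ?_⟩
  simp only [_root_.deletion, mem_filter] at hσ ⊢
  exact ⟨h.2 σ hσ.1 τ hτ, fun hxτ => hσ.2 (hτ hxτ)⟩

lemma mem_facets_link (h : IsComplex Δ) {σ : Finset ℕ} :
    σ ∈ facets (link Δ x) ↔ x ∉ σ ∧ insert x σ ∈ facets Δ := by
  simp only [mem_facets, link, mem_filter]
  constructor
  · rintro ⟨⟨-, hxσ, hσ⟩, hmax⟩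
    refine ⟨hxσ, hσ, fun τ hτ hστ => ?_⟩
    have hxτ : x ∈ τ := hστ (mem_insert_self x σ)
    have hτ' : τ.erase x ∈ Δ := h.2 τ hτ _ (erase_subset x τ)
    rw [hmax (τ.erase x) ⟨hτ', notMem_erase x τ, by rwa [insert_erase hxτ]⟩
      (subset_erase.2 ⟨(subset_insert x σ).trans hστ, hxσ⟩), insert_erase hxτ]
  · rintro ⟨hxσ, hσ, hmax⟩
    refine ⟨⟨h.2 _ hσ σ (subset_insert x σ), hxσ, hσ⟩, fun τ ⟨_, hxτ, hτ⟩ hστ => ?_⟩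
    have := congrArg (erase · x) (hmax _ hτ (insert_subset_insert x hστ))
    simpa only [erase_insert hxσ, erase_insert hxτ] using this

lemma facets_eq_filter_union_image_link (h : IsComplex Δ) :
    facets Δ = (facets Δ).filter (x ∉ ·) ∪ (facets (link Δ x)).image (insert x) := by
  ext σ
  simp only [mem_union, mem_filter, mem_image, mem_facets_link h]
  constructor
  · intro hσ
    by_cases hxσ : x ∈ σ
    · exact Or.inr ⟨σ.erase x, ⟨notMem_erase x σ, by rwa [insert_erase hxσ]⟩, insert_erase hxσ⟩
    · exact Or.inl ⟨hσ, hxσ⟩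
  · rintro (⟨hσ, -⟩ | ⟨τ, ⟨-, hτ⟩, rfl⟩)
    exacts [hσ, hτ]

/-- Purity rules out a facet `F.erase x` of the deletion coming from a facet `F ∋ x`:
it would be one vertex smaller than the facets of `Δ` avoiding `x`. -/
lemma facets_deletion (h : IsComplex Δ) (hpure : IsPure Δ) (hdpure : IsPure (deletion Δ x))
    {F₀ : Finset ℕ} (hF₀ : F₀ ∈ facets Δ) (hxF₀ : x ∉ F₀) :
    facets (deletion Δ x) = (facets Δ).filter (x ∉ ·) := by
  ext G
  simp only [mem_filter, mem_facets, deletion]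
  constructor
  · rintro ⟨⟨hG, hxG⟩, hmax⟩
    obtain ⟨F, hF, hGF⟩ := exists_mem_facets_superset hG
    by_cases hxF : x ∈ F
    · obtain ⟨k, hk⟩ := hpure
      obtain ⟨k', hk'⟩ := hdpure
      have hG_eq : G = F.erase x := hmax _ ⟨h.2 F (mem_facets.1 hF).1 _ (erase_subset x F),
        notMem_erase x F⟩ (subset_erase.2 ⟨hGF, hxG⟩)
      have hF₀' : F₀ ∈ facets (deletion Δ x) := by
        simpa [deletion, mem_facets] using ⟨⟨(mem_facets.1 hF₀).1, hxF₀⟩,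
          fun τ hτ _ => (mem_facets.1 hF₀).2 τ hτ⟩
      have hG' : G ∈ facets (deletion Δ x) := by
        simpa [deletion, mem_facets] using ⟨⟨hG, hxG⟩, fun τ hτ hxτ => hmax τ ⟨hτ, hxτ⟩⟩
      have hGF₀ : G.card = F₀.card := (hk' G hG').trans (hk' F₀ hF₀').symm
      have hFF₀ : F.card = F₀.card := (hk F hF).trans (hk F₀ hF₀).symm
      have hGF : G.card + 1 = F.card := by rw [hG_eq, card_erase_add_one hxF]
      omega
    · rw [hmax F ⟨(mem_facets.1 hF).1, hxF⟩ hGF]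
      exact ⟨mem_facets.1 hF, hxF⟩
  · rintro ⟨⟨hG, hmax⟩, hxG⟩
    exact ⟨⟨hG, hxG⟩, fun τ hτ => hmax τ hτ.1⟩

end Facets

def IsShellingOrder (S : Finset (Finset ℕ)) (n : ℕ) (F : ℕ → Finset ℕ) : Prop :=
  S = (range n).image F ∧ (∀ i < n, ∀ j < n, F i = F j → i = j) ∧
    ∀ j, 1 ≤ j → j < n → ∀ i < j, ∃ i' < j,
      (F j ∩ F i').card = (F j).card - 1 ∧ F j ∩ F i ⊆ F j ∩ F i'

lemma isShellable_iff_exists_isShellingOrder {Δ : Finset (Finset ℕ)} :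
    IsShellable Δ ↔ ∃ n F, IsShellingOrder (facets Δ) n F :=
  Iff.rfl

lemma image_range_add_ite {α : Type*} [DecidableEq α] (n₁ n₂ : ℕ) (f g : ℕ → α) :
    (range (n₁ + n₂)).image (fun j => if j < n₁ then f j else g (j - n₁)) =
      (range n₁).image f ∪ (range n₂).image g := by
  rw [range_add, image_union, map_eq_image, image_image]
  congr 1
  · exact image_congr fun j hj => if_pos (mem_range.1 hj)
  · exact image_congr fun j _ => by simp

namespace IsShellingOrder

variable {S T : Finset (Finset ℕ)} {n n₁ n₂ : ℕ} {F F₁ F₂ : ℕ → Finset ℕ}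

lemma mem (h : IsShellingOrder S n F) {j : ℕ} (hj : j < n) : F j ∈ S :=
  h.1 ▸ mem_image_of_mem F (mem_range.2 hj)

lemma empty : IsShellingOrder ∅ 0 F :=
  ⟨by simp, by simp, fun _ _ _ => by omega⟩

lemma singleton (σ : Finset ℕ) : IsShellingOrder {σ} 1 (fun _ => σ) :=
  ⟨by simp, fun _ _ _ _ _ => by omega, fun _ _ _ => by omega⟩

lemma image_insert (h : IsShellingOrder S n F) {x : ℕ} (hx : ∀ σ ∈ S, x ∉ σ)
    (hS : IsAntichain (· ⊆ ·) (S : Set (Finset ℕ))) :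
    IsShellingOrder (S.image (insert x)) n (fun j => insert x (F j)) := by
  have hxF : ∀ j < n, x ∉ F j := fun j hj => hx _ (h.mem hj)
  refine ⟨by rw [h.1, image_image]; rfl, fun i hi j hj hij => h.2.1 i hi j hj ?_,
    fun j hj₁ hjn i hij => ?_⟩
  · simpa [erase_insert (hxF i hi), erase_insert (hxF j hj)] using congrArg (erase · x) hij
  · obtain ⟨i', hi', hcard, hsub⟩ := h.2.2 j hj₁ hjn i hij
    -- Truncated subtraction: `F j ≠ ∅`, since `∅ ⊆ F 0 ≠ F j` in an antichain.
    have hpos : 0 < (F j).card := by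
      refine card_pos.2 (nonempty_iff_ne_empty.2 fun hj0 => ?_)
      have := hS.eq (h.mem hjn) (h.mem (by omega : 0 < n)) (hj0 ▸ empty_subset _)
      exact absurd (h.2.1 j hjn 0 (by omega) this) (by omega)
    refine ⟨i', hi', ?_, ?_⟩
    · rw [← insert_inter_distrib, card_insert_of_notMem (hxF j hjn ∘ mem_of_mem_inter_left),
        card_insert_of_notMem (hxF j hjn), hcard]
      omega
    · rw [← insert_inter_distrib, ← insert_inter_distrib]
      exact insert_subset_insert x hsub

lemma append (h₁ : IsShellingOrder S n₁ F₁) (h₂ : IsShellingOrder T n₂ F₂) (hST : Disjoint S T)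
    (hcross : ∀ τ ∈ T, ∀ σ ∈ S, ∃ σ' ∈ S, (τ ∩ σ').card = τ.card - 1 ∧ τ ∩ σ ⊆ τ ∩ σ') :
    IsShellingOrder (S ∪ T) (n₁ + n₂) (fun j => if j < n₁ then F₁ j else F₂ (j - n₁)) := by
  set F := fun j => if j < n₁ then F₁ j else F₂ (j - n₁)
  have hF₁ : ∀ j < n₁, F j = F₁ j := fun j hj => if_pos hj
  have hF₂ : ∀ j, F (n₁ + j) = F₂ j := fun j => by simp [F]
  have hS : ∀ k < n₁, F k ∈ S := fun k hk => hF₁ k hk ▸ h₁.mem hk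
  have hT : ∀ k, n₁ ≤ k → k < n₁ + n₂ → F k ∈ T := fun k hk hk' => by
    obtain ⟨k, rfl⟩ := Nat.exists_eq_add_of_le hk
    exact hF₂ k ▸ h₂.mem (by omega)
  refine ⟨by rw [h₁.1, h₂.1, image_range_add_ite], fun i hi j hj hij => ?_,
    fun j hj hjn i hij => ?_⟩
  · rcases lt_or_ge i n₁ with hi₁ | hi₁ <;> rcases lt_or_ge j n₁ with hj₁ | hj₁
    · exact h₁.2.1 i hi₁ j hj₁ (by rwa [hF₁ i hi₁, hF₁ j hj₁] at hij)
    · exact absurd (hij ▸ hT j hj₁ hj) (disjoint_left.1 hST (hS i hi₁))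
    · exact absurd (hij ▸ hT i hi₁ hi) (disjoint_left.1 hST (hS j hj₁))
    · obtain ⟨i, rfl⟩ := Nat.exists_eq_add_of_le hi₁
      obtain ⟨j, rfl⟩ := Nat.exists_eq_add_of_le hj₁
      rw [hF₂, hF₂] at hij
      rw [h₂.2.1 i (by omega) j (by omega) hij]
  · rcases lt_or_ge j n₁ with hj₁ | hj₁
    · obtain ⟨i', hi', hshell⟩ := h₁.2.2 j hj hj₁ i hij
      refine ⟨i', hi', ?_⟩
      rwa [hF₁ j hj₁, hF₁ i' (hi'.trans hj₁), hF₁ i (hij.trans hj₁)]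
    obtain ⟨j, rfl⟩ := Nat.exists_eq_add_of_le hj₁
    rcases lt_or_ge i n₁ with hi₁ | hi₁
    · obtain ⟨σ', hσ', hshell⟩ := hcross _ (h₂.mem (by omega : j < n₂)) _ (h₁.mem hi₁)
      obtain ⟨i', hi', rfl⟩ := mem_image.1 (h₁.1 ▸ hσ')
      have hi' := mem_range.1 hi'
      exact ⟨i', by omega, by rwa [hF₂, hF₁ i' hi', hF₁ i hi₁]⟩
    · obtain ⟨i, rfl⟩ := Nat.exists_eq_add_of_le hi₁
      obtain ⟨i', hi', hshell⟩ := h₂.2.2 j (by omega) (by omega) i (by omega)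
      exact ⟨n₁ + i', by omega, by rwa [hF₂, hF₂, hF₂]⟩

end IsShellingOrder

lemma isShellable_of_forall_subset {Δ : Finset (Finset ℕ)} {σ : Finset ℕ} (hσ : σ ∈ Δ)
    (hmax : ∀ τ ∈ Δ, τ ⊆ σ) : IsShellable Δ :=
  ⟨1, _, facets_eq_singleton hσ hmax ▸ IsShellingOrder.singleton σ⟩

lemma isShellable_of_link_of_deletion {Δ : Finset (Finset ℕ)} {x : ℕ} (h : IsComplex Δ)
    (hpure : IsPure Δ) (hdpure : IsPure (deletion Δ x))
    (hl : IsShellable (link Δ x)) (hd : IsShellable (deletion Δ x)) : IsShellable Δ := by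
  set S := (facets Δ).filter (x ∉ ·)
  set T := (facets (link Δ x)).image (insert x)
  have hxS : ∀ σ ∈ S, x ∉ σ := fun σ hσ => (mem_filter.1 hσ).2
  have hS : S = ∅ ∨ S = facets (deletion Δ x) := by
    rcases S.eq_empty_or_nonempty with hS | ⟨F₀, hF₀⟩
    · exact Or.inl hS
    · exact Or.inr (facets_deletion h hpure hdpure (mem_filter.1 hF₀).1 (hxS F₀ hF₀)).symm
  obtain ⟨n₁, F₁, hF₁⟩ : ∃ n F, IsShellingOrder S n F := by
    rcases hS with hS | hS
    exacts [⟨0, fun _ => ∅, hS ▸ IsShellingOrder.empty⟩, hS ▸ hd]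
  obtain ⟨n₂, F₂, hF₂⟩ := isShellable_iff_exists_isShellingOrder.1 hl
  have hST : Disjoint S T := by
    refine disjoint_left.2 fun σ hσS hσT => hxS σ hσS ?_
    obtain ⟨A, -, rfl⟩ := mem_image.1 hσT
    exact mem_insert_self x A
  have hcross : ∀ τ ∈ T, ∀ σ ∈ S, ∃ σ' ∈ S,
      (τ ∩ σ').card = τ.card - 1 ∧ τ ∩ σ ⊆ τ ∩ σ' := by
    rintro _ hτ σ hσ
    obtain ⟨A, hA, rfl⟩ := mem_image.1 hτ
    obtain ⟨hxA, -⟩ := (mem_facets_link h).1 hA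
    have hAd : A ∈ deletion Δ x := mem_filter.2 ⟨(mem_filter.1 (mem_facets.1 hA).1).1, hxA⟩
    obtain ⟨σ', hσ', hAσ'⟩ := exists_mem_facets_superset hAd
    rcases hS with hS | hS
    · simp [hS] at hσ
    rw [← hS] at hσ'
    refine ⟨σ', hσ', ?_, ?_⟩
    · rw [insert_inter_of_notMem (hxS σ' hσ'), inter_eq_left.2 hAσ', card_insert_of_notMem hxA]
      rfl
    · rw [insert_inter_of_notMem (hxS σ hσ), insert_inter_of_notMem (hxS σ' hσ'),
        inter_eq_left.2 hAσ']
      exact inter_subset_left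
  have hT : IsShellingOrder T n₂ (fun j => insert x (F₂ j)) :=
    hF₂.image_insert (fun σ hσ => ((mem_facets_link h).1 hσ).1) isAntichain_facets
  rw [isShellable_iff_exists_isShellingOrder, facets_eq_filter_union_image_link h (x := x)]
  exact ⟨_, _, hF₁.append hT hST hcross⟩

/-- Every vertex decomposable pure simplicial complex is shellable. -/
theorem vertexDecomposable_shellable (Δ : Finset (Finset ℕ))
    (h₁ : IsComplex Δ) (h₂ : IsPure Δ) (h₃ : VertexDecomposable Δ) :
    IsShellable Δ := by
  induction h₃ with
  | emptyFace => exact isShellable_of_forall_subset (mem_singleton_self ∅) (by simp)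
  | point x => exact isShellable_of_forall_subset (σ := {x}) (by simp) (by simp)
  | step Δ x hx hl _ hd _ ihl ihd =>
    exact isShellable_of_link_of_deletion h₁ h₂ hd (ihl (h₁.link hx) hl) (ihd h₁.deletion hd)
end

section
/- For positive integers n, k, the size of the shadow of the initial segment of the squashed order satisfies |∂S_k(n)| = δ_{k-1}(n) = C(a_k,k-1)+C(a_{k-1},k-2)+…+C(a_t,t-1), where n = C(a_k,k)+C(a_{k-1},k-1)+…+C(a_t,t) is the unique cascade representation of n with a_k > a_{k-1} > … > a_t ≥ t ≥ 1. -/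
open Finset

/-- The squashed (colexicographic) order on finite subsets of `ℕ`:
`A < B` iff `max (A ∖ B) < max (B ∖ A)`. -/
def SquashedLT (A B : Finset ℕ) : Prop :=
  (A \ B).max < (B \ A).max

/-- `S` is the family of the first `n` `k`-element subsets of `ℕ` in the squashed
order: it has `n` members, all of size `k`, and is downward closed in the squashed
order among `k`-element sets. -/
def IsSquashedInitSeg (k n : ℕ) (S : Finset (Finset ℕ)) : Prop :=
  S.card = n ∧ (∀ A ∈ S, A.card = k) ∧
  ∀ A ∈ S, ∀ B : Finset ℕ, B.card = k → SquashedLT B A → B ∈ S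

/-- `S` is the family of the first `n` `k`-element subsets of `ℕ` not containing `i`,
in the squashed order. -/
def IsSquashedInitSegAvoiding (i k n : ℕ) (S : Finset (Finset ℕ)) : Prop :=
  S.card = n ∧ (∀ A ∈ S, A.card = k ∧ i ∉ A) ∧
  ∀ A ∈ S, ∀ B : Finset ℕ, B.card = k → i ∉ B → SquashedLT B A → B ∈ S

/-- `a`, on the interval `[t, k]`, gives the cascade (binomial) representation of `n`
with respect to `k`:  `n = C(a k, k) + C(a (k-1), k-1) + ⋯ + C(a t, t)` where
`a k > a (k-1) > ⋯ > a t ≥ t ≥ 1`. -/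
def IsCascade (n k t : ℕ) (a : ℕ → ℕ) : Prop :=
  1 ≤ t ∧ t ≤ k ∧ t ≤ a t ∧ (∀ j, t ≤ j → j < k → a j < a (j + 1)) ∧
  n = ∑ j ∈ Finset.Icc t k, (a j).choose j


open Finset.Colex

/-! Writing `n = ∑_{j=t}^{k} C(a_j, j)`, the `k`-sets whose elements `≥ a_j` are exactly
`a_{j+1}, …, a_k`, for some `t ≤ j ≤ k`, are `n` in number (`j` free elements below `a_j`) and form
an initial segment of colex, which is the squashed order; so they are `S_k(n)`. Deleting an element
from such a set gives a `(k-1)`-set of the same shape, with `i - 1` free elements below `a_i` for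
some `i ≥ j`, and every such set arises, because `i - 1 < a_i` leaves room to add one back. Hence
`∂S_k(n)` is a disjoint union of `C(a_j, j - 1)` sets. -/

lemma Finset.max_lt_max_iff {α : Type*} [LinearOrder α] {s t : Finset α} :
    s.max < t.max ↔ ∃ b ∈ t, ∀ x ∈ s, x < b := by
  simp only [Finset.max, Finset.lt_sup_iff]
  refine exists_congr fun b => and_congr_right fun _ => ?_
  rw [Finset.sup_lt_iff (WithBot.bot_lt_coe b)]
  simp only [WithBot.coe_lt_coe]

lemma squashedLT_iff_toColex_lt {A B : Finset ℕ} : SquashedLT A B ↔ toColex A < toColex B := by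
  simp only [SquashedLT, Finset.max_lt_max_iff, toColex_lt_toColex_iff_exists_forall_lt,
    mem_sdiff, and_imp, and_assoc]

lemma IsSquashedInitSeg.isInitSeg {k n : ℕ} {S : Finset (Finset ℕ)}
    (hS : IsSquashedInitSeg k n S) : IsInitSeg S k :=
  ⟨hS.2.1, fun _ B hA ⟨hlt, hB⟩ => hS.2.2 _ hA B hB (squashedLT_iff_toColex_lt.2 hlt)⟩

lemma Finset.Colex.IsInitSeg.eq_of_card_eq {α : Type*} [LinearOrder α] {r : ℕ}
    {𝒜 ℬ : Finset (Finset α)} (h𝒜 : IsInitSeg 𝒜 r) (hℬ : IsInitSeg ℬ r) (h : #𝒜 = #ℬ) :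
    𝒜 = ℬ := by
  rcases h𝒜.total hℬ with hsub | hsub
  · exact eq_of_subset_of_card_le hsub h.ge
  · exact (eq_of_subset_of_card_le hsub h.le).symm

lemma IsCascade.strictMonoOn {n k t : ℕ} {a : ℕ → ℕ} (hc : IsCascade n k t a) :
    StrictMonoOn a (Set.Icc t k) :=
  strictMonoOn_of_lt_add_one Set.ordConnected_Icc fun j _ hj hj' => hc.2.2.2.1 j hj.1 hj'.2

lemma IsCascade.le_apply {n k t : ℕ} {a : ℕ → ℕ} (hc : IsCascade n k t a) {j : ℕ}
    (hj : j ∈ Icc t k) : j ≤ a j := by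
  obtain ⟨htj, hjk⟩ := mem_Icc.1 hj
  clear hj
  induction j, htj using Nat.le_induction with
  | base => exact hc.2.2.1
  | succ j htj ih => have := hc.2.2.2.1 j htj hjk; omega

namespace Cascade

def tail (a : ℕ → ℕ) (k j : ℕ) : Finset ℕ := (Ioc j k).image a

def piece (a : ℕ → ℕ) (k j c : ℕ) : Finset (Finset ℕ) :=
  ((range (a j)).powersetCard c).image (· ∪ tail a k j)

def family (a : ℕ → ℕ) (t k : ℕ) (c : ℕ → ℕ) : Finset (Finset ℕ) :=
  (Icc t k).biUnion fun j => piece a k j (c j)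

variable {a : ℕ → ℕ} {t k : ℕ} (ha : StrictMonoOn a (Set.Icc t k))
include ha

lemma lt_of_mem_tail {j x : ℕ} (htj : t ≤ j) (hx : x ∈ tail a k j) : a j < x := by
  obtain ⟨m, hm, rfl⟩ := mem_image.1 hx
  rw [mem_Ioc] at hm
  exact ha ⟨htj, by omega⟩ ⟨by omega, hm.2⟩ hm.1

lemma card_tail {j : ℕ} (htj : t ≤ j) : #(tail a k j) = k - j := by
  rw [tail, card_image_of_injOn, Nat.card_Ioc]
  exact ha.injOn.mono fun m hm => by simp only [coe_Ioc, Set.mem_Ioc] at hm; exact ⟨by omega, hm.2⟩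

lemma filter_tail_eq_tail {i j : ℕ} (htj : t ≤ j) (hji : j ≤ i) (hik : i ≤ k) :
    {x ∈ tail a k j | a i < x} = tail a k i := by
  ext x
  simp only [tail, mem_filter, mem_image, mem_Ioc]
  constructor
  · rintro ⟨⟨m, ⟨hjm, hmk⟩, rfl⟩, hlt⟩
    exact ⟨m, ⟨(ha.lt_iff_lt ⟨by omega, hik⟩ ⟨by omega, hmk⟩).1 hlt, hmk⟩, rfl⟩
  · rintro ⟨m, ⟨him, hmk⟩, rfl⟩
    exact ⟨⟨m, ⟨by omega, hmk⟩, rfl⟩, ha ⟨by omega, hik⟩ ⟨by omega, hmk⟩ him⟩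

lemma card_eq_of_filter_eq_tail {j : ℕ} (htj : t ≤ j) {B : Finset ℕ}
    (hB : {x ∈ B | a j ≤ x} = tail a k j) : #B = #{x ∈ B | x < a j} + (k - j) := by
  rw [← card_tail ha htj, ← hB, ← card_filter_add_card_filter_not (fun x => x < a j)]
  simp only [not_lt]

lemma filter_le_union_tail {j : ℕ} (htj : t ≤ j) {A : Finset ℕ} (hA : A ⊆ range (a j)) :
    {x ∈ A ∪ tail a k j | a j ≤ x} = tail a k j := by
  rw [filter_union, filter_false_of_mem fun x hx => not_le.2 (mem_range.1 (hA hx)),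
    filter_true_of_mem fun x hx => (lt_of_mem_tail ha htj hx).le, empty_union]

lemma filter_lt_union_tail {j : ℕ} (htj : t ≤ j) {A : Finset ℕ} (hA : A ⊆ range (a j)) :
    {x ∈ A ∪ tail a k j | x < a j} = A := by
  rw [filter_union, filter_true_of_mem fun x hx => mem_range.1 (hA hx),
    filter_false_of_mem fun x hx => not_lt.2 (lt_of_mem_tail ha htj hx).le, union_empty]

lemma mem_piece {j c : ℕ} (htj : t ≤ j) {B : Finset ℕ} :
    B ∈ piece a k j c ↔ {x ∈ B | a j ≤ x} = tail a k j ∧ #{x ∈ B | x < a j} = c := by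
  constructor
  · simp only [piece, mem_image, mem_powersetCard]
    rintro ⟨A, ⟨hA, rfl⟩, rfl⟩
    exact ⟨filter_le_union_tail ha htj hA, by rw [filter_lt_union_tail ha htj hA]⟩
  · rintro ⟨hup, hlow⟩
    refine mem_image.2 ⟨{x ∈ B | x < a j}, mem_powersetCard.2 ⟨?_, hlow⟩, ?_⟩
    · intro x hx
      exact mem_range.2 (mem_filter.1 hx).2
    · rw [← hup, ← filter_or]
      exact filter_true_of_mem fun x _ => lt_or_ge x (a j)

lemma disjoint_piece {i j c d : ℕ} (hti : t ≤ i) (hij : i < j) (hjk : j ≤ k) :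
    Disjoint (piece a k i c) (piece a k j d) := by
  refine disjoint_left.2 fun B hBi hBj => ?_
  have haj : a j ∈ {x ∈ B | a i ≤ x} := by
    rw [((mem_piece ha hti).1 hBi).1]
    exact mem_image_of_mem a (mem_Ioc.2 ⟨hij, hjk⟩)
  have haj' : a j ∈ tail a k j := by
    rw [← ((mem_piece ha (hti.trans hij.le)).1 hBj).1]
    exact mem_filter.2 ⟨(mem_filter.1 haj).1, le_rfl⟩
  exact (lt_of_mem_tail ha (hti.trans hij.le) haj').false

lemma card_family (c : ℕ → ℕ) : #(family a t k c) = ∑ j ∈ Icc t k, (a j).choose (c j) := by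
  rw [family, card_biUnion]
  · refine sum_congr rfl fun j hj => ?_
    have htj := (mem_Icc.1 hj).1
    rw [piece, card_image_of_injOn, card_powersetCard, card_range]
    intro A hA A' hA' hAA'
    rw [← filter_lt_union_tail ha htj (mem_powersetCard.1 hA).1,
      ← filter_lt_union_tail ha htj (mem_powersetCard.1 hA').1]
    exact congrArg (filter (· < a j)) hAA'
  · intro i hi j hj hij
    rw [coe_Icc] at hi hj
    rcases hij.lt_or_gt with h | h
    · exact disjoint_piece ha hi.1 h hj.2
    · exact (disjoint_piece ha hj.1 h hi.2).symm

lemma mem_family {c : ℕ → ℕ} {B : Finset ℕ} :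
    B ∈ family a t k c ↔
      ∃ j ∈ Icc t k, {x ∈ B | a j ≤ x} = tail a k j ∧ #B = c j + (k - j) := by
  simp only [family, mem_biUnion]
  refine exists_congr fun j => and_congr_right fun hj => ?_
  rw [mem_piece ha (mem_Icc.1 hj).1]
  exact and_congr_right fun hup => by rw [card_eq_of_filter_eq_tail ha (mem_Icc.1 hj).1 hup]; omega

-- Applies both to a colex predecessor `B` of `A` and to `B = A.erase w`.
lemma exists_filter_eq_tail {j w : ℕ} {A B : Finset ℕ} (hj : j ∈ Icc t k)
    (hA : {x ∈ A | a j ≤ x} = tail a k j) (hwA : w ∈ A) (hwB : w ∉ B)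
    (hBA : {x ∈ B | w < x} = {x ∈ A | w < x}) :
    ∃ i ∈ Icc t k, {x ∈ B | a i ≤ x} = tail a k i := by
  rw [mem_Icc] at hj
  by_cases hw : w < a j
  · have above : ∀ C : Finset ℕ, {x ∈ {x ∈ C | w < x} | a j ≤ x} = {x ∈ C | a j ≤ x} := by
      intro C
      rw [filter_filter]
      exact filter_congr fun x _ => ⟨And.right, fun h => ⟨hw.trans_le h, h⟩⟩
    exact ⟨j, mem_Icc.2 hj, by rw [← above B, hBA, above A, hA]⟩
  · have hw_tail : w ∈ tail a k j := hA ▸ mem_filter.2 ⟨hwA, not_lt.1 hw⟩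
    obtain ⟨i, hi, rfl⟩ := mem_image.1 hw_tail
    rw [mem_Ioc] at hi
    refine ⟨i, mem_Icc.2 ⟨by omega, hi.2⟩, ?_⟩
    have hji : a j < a i := ha ⟨hj.1, hj.2⟩ ⟨by omega, hi.2⟩ hi.1
    calc {x ∈ B | a i ≤ x} = {x ∈ B | a i < x} :=
          filter_congr fun x hx => (ne_of_mem_of_not_mem hx hwB).symm.le_iff_lt
      _ = {x ∈ {x ∈ A | a j ≤ x} | a i < x} := by
          rw [hBA, filter_filter]
          exact filter_congr fun x _ => ⟨fun h => ⟨hji.le.trans h.le, h⟩, And.right⟩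
      _ = tail a k i := by rw [hA, filter_tail_eq_tail ha hj.1 hi.1.le hi.2]

lemma isInitSeg_family : IsInitSeg (family a t k fun j => j) k := by
  refine ⟨fun A hA => ?_, fun A B hA ⟨hlt, hB⟩ => ?_⟩
  · obtain ⟨j, hj, -, hcard⟩ := (mem_family ha).1 hA
    rw [hcard]; have := (mem_Icc.1 hj).2; omega
  · obtain ⟨j, hj, hAj, -⟩ := (mem_family ha).1 hA
    obtain ⟨w, hw, hBA⟩ := lt_iff_exists_filter_lt.1 hlt
    obtain ⟨hwA, hwB⟩ := mem_sdiff.1 hw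
    obtain ⟨i, hi, hBi⟩ := exists_filter_eq_tail ha hj hAj hwA hwB hBA
    exact (mem_family ha).2 ⟨i, hi, hBi, by have := (mem_Icc.1 hi).2; omega⟩

lemma shadow_family (ht : 1 ≤ t) (hle : ∀ j ∈ Icc t k, j ≤ a j) :
    shadow (family a t k fun j => j) = family a t k fun j => j - 1 := by
  ext B
  rw [mem_family ha]
  constructor
  · intro hB
    obtain ⟨C, hC, x, hx, rfl⟩ := mem_shadow_iff.1 hB
    obtain ⟨j, hj, hCj, hCcard⟩ := (mem_family ha).1 hC
    have hagree : {y ∈ C.erase x | x < y} = {y ∈ C | x < y} := by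
      rw [filter_erase, erase_eq_of_notMem fun h => (mem_filter.1 h).2.false]
    obtain ⟨i, hi, hBi⟩ := exists_filter_eq_tail ha hj hCj hx (notMem_erase x C) hagree
    refine ⟨i, hi, hBi, ?_⟩
    rw [card_erase_of_mem hx, hCcard]
    have := mem_Icc.1 hi; have := mem_Icc.1 hj; omega
  · rintro ⟨j, hj, hBj, hBcard⟩
    have htj := (mem_Icc.1 hj).1
    have hlow : #{y ∈ B | y < a j} < #(range (a j)) := by
      have := card_eq_of_filter_eq_tail ha htj hBj
      have := hle j hj
      rw [card_range]; omega
    obtain ⟨x, hxr, hx_low⟩ := exists_mem_notMem_of_card_lt_card hlow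
    have hxa : x < a j := mem_range.1 hxr
    have hxB : x ∉ B := fun h => hx_low (mem_filter.2 ⟨h, hxa⟩)
    refine mem_shadow_iff_insert_mem.2 ⟨x, hxB, (mem_family ha).2 ⟨j, hj, ?_, ?_⟩⟩
    · rw [filter_insert, if_neg (not_le.2 hxa), hBj]
    · rw [card_insert_of_notMem hxB, hBcard]; omega

end Cascade

theorem card_shadow_initSeg_general (n k : ℕ)
    (S : Finset (Finset ℕ)) (hS : IsSquashedInitSeg k n S)
    (t : ℕ) (a : ℕ → ℕ) (hc : IsCascade n k t a) :
    (Finset.shadow S).card = ∑ j ∈ Finset.Icc t k, (a j).choose (j - 1) := by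
  have ha := hc.strictMonoOn
  have hS_eq : S = Cascade.family a t k fun j => j := by
    refine hS.isInitSeg.eq_of_card_eq (Cascade.isInitSeg_family ha) ?_
    rw [Cascade.card_family ha, hS.1, hc.2.2.2.2]
  rw [hS_eq, Cascade.shadow_family ha hc.1 fun _ => hc.le_apply, Cascade.card_family ha]

/-- The size of the shadow of the initial segment `S_k(n)` of the squashed order is
`δ_{k-1}(n)`, computed from the cascade representation of `n`. -/
theorem card_shadow_initSeg (n k : ℕ) (hn : 0 < n) (hk : 0 < k)
    (S : Finset (Finset ℕ)) (hS : IsSquashedInitSeg k n S)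
    (t : ℕ) (a : ℕ → ℕ) (hc : IsCascade n k t a) :
    (Finset.shadow S).card = ∑ j ∈ Finset.Icc t k, (a j).choose (j - 1) :=
  card_shadow_initSeg_general n k S hS t a hc
end

section
/- The minimum of |∂U| over all families U of n distinct k-element sets equals δ_{k-1}(n) (with n, k positive integers). -/
/-!
By Kruskal–Katona, among `n` sets of size `k` the first `n` in colex order have the smallest
shadow; Mathlib proves this over `Fin N`, and every finite family of finsets of `ℕ` lives in some
`range N`. If `n = C(a_k, k) + ⋯ + C(a_t, t)`, the first `n` `k`-sets in colex order are all
`k`-subsets of `{0, …, a_k - 1}` followed by the sets `{a_k} ∪ B`, `B` among the first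
`C(a_{k-1}, k-1) + ⋯ + C(a_t, t)` `(k-1)`-sets. The shadow splits the same way, into all
`(k-1)`-subsets of `{0, …, a_k - 1}` and the sets `{a_k} ∪ C`, `C` in the shadow of the smaller
segment, so its size is `δ_{k-1}(n)` by induction on `k`.
-/

open Finset

open scoped FinsetFamily

namespace Finset

variable {α : Type*} {r : ℕ} {s : Finset α} {x : α} {𝒜 : Finset (Finset α)}

lemma notMem_of_subset_powersetCard (hx : x ∉ s) (h𝒜 : 𝒜 ⊆ powersetCard r s) :
    ∀ A ∈ 𝒜, x ∉ A :=
  fun _ hA hxA => hx ((mem_powersetCard.1 (h𝒜 hA)).1 hxA)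

variable [DecidableEq α]

lemma shadow_powersetCard (h : r + 1 ≤ #s) : ∂ (powersetCard (r + 1) s) = powersetCard r s := by
  ext u
  simp only [mem_shadow_iff_exists_mem_card_add_one, mem_powersetCard]
  constructor
  · rintro ⟨v, ⟨hvs, hv⟩, huv, hcard⟩
    exact ⟨huv.trans hvs, by omega⟩
  · rintro ⟨hus, rfl⟩
    obtain ⟨v, huv, hvs, hv⟩ := exists_subsuperset_card_eq hus (Nat.le_succ _) h
    exact ⟨v, ⟨hvs, hv⟩, huv, hv⟩

lemma shadow_image_insert (h𝒜 : ∀ A ∈ 𝒜, x ∉ A) :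
    ∂ (𝒜.image (insert x)) = 𝒜 ∪ (∂ 𝒜).image (insert x) := by
  ext u
  simp only [mem_union, mem_shadow_iff, mem_image]
  constructor
  · rintro ⟨_, ⟨A, hA, rfl⟩, y, hy, rfl⟩
    obtain rfl | hyx := eq_or_ne y x
    · left
      rwa [erase_insert (h𝒜 A hA)]
    · exact .inr ⟨A.erase y, ⟨A, hA, y, (mem_insert.1 hy).resolve_left hyx, rfl⟩,
        (erase_insert_of_ne hyx.symm ..).symm⟩
  · rintro (hu | ⟨_, ⟨A, hA, y, hy, rfl⟩, rfl⟩)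
    · exact ⟨insert x u, ⟨u, hu, rfl⟩, x, mem_insert_self _ _, erase_insert (h𝒜 u hu)⟩
    · exact ⟨insert x A, ⟨A, hA, rfl⟩, y, mem_insert_of_mem hy,
        erase_insert_of_ne fun hxy => h𝒜 A hA (hxy ▸ hy) ..⟩

lemma card_image_insert (h𝒜 : ∀ A ∈ 𝒜, x ∉ A) : #(𝒜.image (insert x)) = #𝒜 :=
  card_image_of_injOn fun A hA B hB h => by
    rw [← erase_insert (h𝒜 A hA), ← erase_insert (h𝒜 B hB)]
    exact congrArg (erase · x) h

lemma disjoint_powersetCard_image_insert (hx : x ∉ s) (r : ℕ) (𝒜 : Finset (Finset α)) :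
    Disjoint (powersetCard r s) (𝒜.image (insert x)) := by
  rw [disjoint_left]
  rintro _ hA hA'
  obtain ⟨B, -, rfl⟩ := mem_image.1 hA'
  exact hx ((mem_powersetCard.1 hA).1 (mem_insert_self x B))

lemma notMem_of_mem_shadow (h𝒜 : ∀ A ∈ 𝒜, x ∉ A) : ∀ B ∈ ∂ 𝒜, x ∉ B := fun B hB hxB => by
  obtain ⟨A, hA, hBA⟩ := exists_subset_of_mem_shadow hB
  exact h𝒜 A hA (hBA hxB)

section Transport

variable {α β : Type*} [DecidableEq β]

lemma shadow_image_map [DecidableEq α] (f : α ↪ β) (𝒜 : Finset (Finset α)) :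
    ∂ (𝒜.image (map f)) = (∂ 𝒜).image (map f) := by
  ext u
  simp only [mem_shadow_iff, mem_image]
  constructor
  · rintro ⟨_, ⟨s, hs, rfl⟩, _, hb, rfl⟩
    obtain ⟨a, ha, rfl⟩ := mem_map.1 hb
    exact ⟨s.erase a, ⟨s, hs, a, ha, rfl⟩, map_erase f s a⟩
  · rintro ⟨_, ⟨s, hs, a, ha, rfl⟩, rfl⟩
    exact ⟨s.map f, ⟨s, hs, rfl⟩, f a, mem_map_of_mem f ha, (map_erase f s a).symm⟩

lemma card_image_map (f : α ↪ β) (𝒜 : Finset (Finset α)) : #(𝒜.image (map f)) = #𝒜 :=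
  card_image_of_injective _ (map_injective f)

lemma _root_.Set.Sized.of_image_map {f : α ↪ β} {𝒜 : Finset (Finset α)} {r : ℕ}
    (h : (↑(𝒜.image (map f)) : Set (Finset β)).Sized r) : (↑𝒜 : Set (Finset α)).Sized r :=
  fun s hs => by simpa using h (mem_image_of_mem _ hs)

end Transport

lemma Colex.IsInitSeg.of_image_map {α β : Type*} [LinearOrder α] [LinearOrder β] (f : α ↪o β)
    {𝒞 : Finset (Finset α)} {r : ℕ} (h : IsInitSeg (𝒞.image (map f.toEmbedding)) r) :
    IsInitSeg 𝒞 r := by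
  refine ⟨h.1.of_image_map, fun s t hs ⟨hts, htr⟩ => ?_⟩
  have hlt : toColex (t.map f.toEmbedding) < toColex (s.map f.toEmbedding) := by
    simpa only [map_eq_image, RelEmbedding.coe_toEmbedding] using
      (Colex.toColex_image_lt_toColex_image f.strictMono).2 hts
  obtain ⟨t', ht', heq⟩ := mem_image.1 (h.2 (mem_image_of_mem _ hs) ⟨hlt, by simpa⟩)
  rwa [map_injective _ heq] at ht'

lemma exists_image_map_valOrderEmb_eq {N : ℕ} {𝒜 : Finset (Finset ℕ)}
    (h : ∀ A ∈ 𝒜, A ⊆ range N) :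
    ∃ 𝒜' : Finset (Finset (Fin N)), 𝒜'.image (map (Fin.valOrderEmb N).toEmbedding) = 𝒜 := by
  obtain ⟨𝒜', -, h'⟩ := (subset_set_image_iff (s := Set.univ)).1 fun A (hA : A ∈ 𝒜) =>
    ⟨A.attachFin fun m hm => mem_range.1 (h A hA hm), trivial, map_valEmbedding_attachFin _⟩
  exact ⟨𝒜', h'⟩

theorem kruskal_katona_nat {r : ℕ} {𝒜 𝒞 : Finset (Finset ℕ)}
    (h𝒜 : (𝒜 : Set (Finset ℕ)).Sized r) (h𝒞𝒜 : #𝒞 ≤ #𝒜) (h𝒞 : Colex.IsInitSeg 𝒞 r) :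
    #(∂ 𝒞) ≤ #(∂ 𝒜) := by
  obtain ⟨N, hN⟩ := ((𝒜 ∪ 𝒞).biUnion id).exists_nat_subset_range
  have bounded : ∀ ℬ ⊆ 𝒜 ∪ 𝒞, ∀ B ∈ ℬ, B ⊆ range N := fun ℬ hℬ B hB =>
    (subset_biUnion_of_mem id (hℬ hB)).trans hN
  obtain ⟨𝒜', rfl⟩ := exists_image_map_valOrderEmb_eq (bounded 𝒜 subset_union_left)
  obtain ⟨𝒞', rfl⟩ := exists_image_map_valOrderEmb_eq (bounded _ subset_union_right)
  simp only [shadow_image_map, card_image_map] at h𝒞𝒜 ⊢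
  exact kruskal_katona h𝒜.of_image_map h𝒞𝒜 (h𝒞.of_image_map _)

end Finset

def cascadeStep (r x : ℕ) (𝒜 : Finset (Finset ℕ)) : Finset (Finset ℕ) :=
  powersetCard (r + 1) (range x) ∪ 𝒜.image (insert x)

section CascadeStep

variable {r x : ℕ} {𝒜 : Finset (Finset ℕ)}

lemma card_cascadeStep (h𝒜 : ∀ A ∈ 𝒜, x ∉ A) :
    #(cascadeStep r x 𝒜) = x.choose (r + 1) + #𝒜 := by
  rw [cascadeStep,
    card_union_of_disjoint (disjoint_powersetCard_image_insert notMem_range_self _ _),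
    card_powersetCard, card_range, card_image_insert h𝒜]

lemma shadow_cascadeStep (hrx : r + 1 ≤ x) (h𝒜 : 𝒜 ⊆ powersetCard r (range x)) :
    ∂ (cascadeStep r x 𝒜) = powersetCard r (range x) ∪ (∂ 𝒜).image (insert x) := by
  rw [cascadeStep, shadow, sup_union, sup_eq_union, ← shadow, ← shadow,
    shadow_powersetCard (by rwa [card_range]),
    shadow_image_insert (notMem_of_subset_powersetCard notMem_range_self h𝒜), ← union_assoc,
    union_eq_left.2 h𝒜]

lemma card_shadow_cascadeStep (hrx : r + 1 ≤ x) (h𝒜 : 𝒜 ⊆ powersetCard r (range x)) :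
    #(∂ (cascadeStep r x 𝒜)) = x.choose r + #(∂ 𝒜) := by
  rw [shadow_cascadeStep hrx h𝒜,
    card_union_of_disjoint (disjoint_powersetCard_image_insert notMem_range_self _ _),
    card_powersetCard, card_range,
    card_image_insert (notMem_of_mem_shadow (notMem_of_subset_powersetCard notMem_range_self h𝒜))]

lemma cascadeStep_subset_powersetCard (h𝒜 : 𝒜 ⊆ powersetCard r (range x)) :
    cascadeStep r x 𝒜 ⊆ powersetCard (r + 1) (range (x + 1)) := by
  intro B hB
  rcases mem_union.1 hB with hB | hB
  · exact powersetCard_mono (range_subset_range.2 x.le_succ) hB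
  · obtain ⟨A, hA, rfl⟩ := mem_image.1 hB
    obtain ⟨hAx, hAr⟩ := mem_powersetCard.1 (h𝒜 hA)
    rw [mem_powersetCard, range_add_one,
      card_insert_of_notMem (notMem_of_subset_powersetCard notMem_range_self h𝒜 A hA), hAr]
    exact ⟨insert_subset_insert x hAx, rfl⟩

lemma Finset.Colex.IsInitSeg.cascadeStep (h : Colex.IsInitSeg 𝒜 r)
    (h𝒜 : 𝒜 ⊆ powersetCard r (range x)) : Colex.IsInitSeg (cascadeStep r x 𝒜) (r + 1) := by
  refine ⟨fun B hB => (mem_powersetCard.1 (cascadeStep_subset_powersetCard h𝒜 hB)).2,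
    fun s t hs ⟨hts, htr⟩ => ?_⟩
  have hs_le : ∀ b ∈ s, b ≤ x := fun b hb => Nat.lt_succ_iff.1 <| mem_range.1 <|
    (mem_powersetCard.1 (cascadeStep_subset_powersetCard h𝒜 hs)).1 hb
  by_cases hxt : x ∈ t
  · rcases mem_union.1 hs with hs | hs
    · have hs_lt : ∀ b ∈ s, b < x := fun b hb => mem_range.1 ((mem_powersetCard.1 hs).1 hb)
      exact absurd (Colex.forall_lt_mono hts.le hs_lt x hxt) (lt_irrefl x)
    obtain ⟨A, hA, rfl⟩ := mem_image.1 hs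
    have hlt : toColex (t.erase x) < toColex A := by
      have := (Colex.toColex_sdiff_lt_toColex_sdiff (singleton_subset_iff.2 hxt)
        (singleton_subset_iff.2 (mem_insert_self x A))).2 hts
      rwa [sdiff_singleton_eq_erase, sdiff_singleton_eq_erase,
        erase_insert (notMem_of_subset_powersetCard notMem_range_self h𝒜 A hA)] at this
    have htx : #(t.erase x) = r := by rw [card_erase_of_mem hxt, htr, Nat.add_sub_cancel]
    exact mem_union_right _ (mem_image.2 ⟨t.erase x, h.2 hA ⟨hlt, htx⟩, insert_erase hxt⟩)
  · refine mem_union_left _ (mem_powersetCard.2 ⟨fun b hb => mem_range.2 ?_, htr⟩)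
    exact (Colex.forall_le_mono hts.le hs_le b hb).lt_of_ne fun hbx => hxt (hbx ▸ hb)

end CascadeStep

/-- The first `C(a j, j) + ⋯ + C(a t, t)` sets of size `j` in colex order. -/
def cascadeFamily (a : ℕ → ℕ) (t : ℕ) : ℕ → Finset (Finset ℕ)
  | 0 => ∅
  | j + 1 => if j + 1 < t then ∅ else cascadeStep j (a (j + 1)) (cascadeFamily a t j)

section CascadeFamily

variable {a : ℕ → ℕ} {t k j : ℕ}

lemma cascadeFamily_pred : cascadeFamily a t (t - 1) = ∅ := by
  cases t with
  | zero => rfl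
  | succ s => cases s <;> simp [cascadeFamily]

lemma cascadeFamily_succ (h : t ≤ j + 1) :
    cascadeFamily a t (j + 1) = cascadeStep j (a (j + 1)) (cascadeFamily a t j) := by
  rw [cascadeFamily, if_neg h.not_gt]

variable (hmono : ∀ i, t ≤ i → i < k → a i < a (i + 1))
include hmono

lemma cascadeFamily_subset_powersetCard (htj : t - 1 ≤ j) (hjk : j < k) :
    cascadeFamily a t j ⊆ powersetCard j (range (a (j + 1))) := by
  induction j, htj using Nat.le_induction with
  | base => simp [cascadeFamily_pred]
  | succ m hm ih =>
    rw [cascadeFamily_succ (by omega)]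
    exact (cascadeStep_subset_powersetCard (ih (by omega))).trans <|
      powersetCard_mono <| range_subset_range.2 <| hmono (m + 1) (by omega) hjk

lemma le_apply_of_cascade (hta : t ≤ a t) (htj : t ≤ j) (hjk : j ≤ k) : j ≤ a j := by
  induction j, htj using Nat.le_induction with
  | base => exact hta
  | succ m hm ih => exact (ih (by omega)).trans_lt (hmono m hm hjk)

lemma isInitSeg_cascadeFamily (htj : t - 1 ≤ j) (hjk : j ≤ k) :
    Colex.IsInitSeg (cascadeFamily a t j) j := by
  induction j, htj using Nat.le_induction with
  | base => simp [cascadeFamily_pred]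
  | succ m hm ih =>
    rw [cascadeFamily_succ (by omega)]
    exact (ih (by omega)).cascadeStep (cascadeFamily_subset_powersetCard hmono hm (by omega))

lemma card_cascadeFamily (ht : 1 ≤ t) (htj : t - 1 ≤ j) (hjk : j ≤ k) :
    #(cascadeFamily a t j) = ∑ i ∈ Icc t j, (a i).choose i := by
  induction j, htj using Nat.le_induction with
  | base => rw [cascadeFamily_pred, Icc_eq_empty (by omega), card_empty, sum_empty]
  | succ m hm ih =>
    rw [cascadeFamily_succ (by omega), card_cascadeStep, ih (by omega),
      sum_Icc_succ_top (by omega), add_comm]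
    exact notMem_of_subset_powersetCard notMem_range_self
      (cascadeFamily_subset_powersetCard hmono hm (by omega))

lemma card_shadow_cascadeFamily (ht : 1 ≤ t) (hta : t ≤ a t) (htj : t - 1 ≤ j) (hjk : j ≤ k) :
    #(∂ (cascadeFamily a t j)) = ∑ i ∈ Icc t j, (a i).choose (i - 1) := by
  induction j, htj using Nat.le_induction with
  | base => rw [cascadeFamily_pred, shadow_empty, Icc_eq_empty (by omega), card_empty, sum_empty]
  | succ m hm ih =>
    rw [cascadeFamily_succ (by omega),
      card_shadow_cascadeStep (le_apply_of_cascade hmono hta (by omega) hjk)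
        (cascadeFamily_subset_powersetCard hmono hm (by omega)),
      ih (by omega), sum_Icc_succ_top (by omega), Nat.add_sub_cancel, add_comm]

end CascadeFamily

lemma minShadow_card_of_isInitSeg {𝒞 : Finset (Finset ℕ)} {k : ℕ} (h : Colex.IsInitSeg 𝒞 k) :
    minShadow #𝒞 k = #(∂ 𝒞) :=
  le_antisymm (Nat.sInf_le ⟨𝒞, rfl, h.1, rfl⟩) <| le_csInf ⟨_, 𝒞, rfl, h.1, rfl⟩
    fun _ ⟨_, h𝒜, h𝒜k, hm⟩ => hm ▸ kruskal_katona_nat h𝒜k h𝒜.ge h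

theorem minShadow_eq_delta_general (n k : ℕ)
    (t : ℕ) (a : ℕ → ℕ) (hc : IsCascade n k t a) :
    minShadow n k = ∑ j ∈ Finset.Icc t k, (a j).choose (j - 1) := by
  obtain ⟨ht, htk, hta, hmono, rfl⟩ := hc
  have htk' : t - 1 ≤ k := by omega
  rw [← card_cascadeFamily hmono ht htk' le_rfl,
    ← card_shadow_cascadeFamily hmono ht hta htk' le_rfl]
  exact minShadow_card_of_isInitSeg (isInitSeg_cascadeFamily hmono htk' le_rfl)

/-- The minimum of `|∂U|` over all families `U` of `n` distinct `k`-element sets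
equals `δ_{k-1}(n)`, computed from the cascade representation of `n`. -/
theorem minShadow_eq_delta (n k : ℕ) (hn : 0 < n) (hk : 0 < k)
    (t : ℕ) (a : ℕ → ℕ) (hc : IsCascade n k t a) :
    minShadow n k = ∑ j ∈ Finset.Icc t k, (a j).choose (j - 1) :=
  minShadow_eq_delta_general n k t a hc
end
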